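/- Let E_1, …, E_n be Banach spaces and K_1 ⊆ E_1*, …, K_n ⊆ E_n* weak-*-compact sets, and consider the product ∏_{i=1}^n K_i as a subset of the dual of the ℓ1-direct sum (⊕_{i=1}^n E_i)_1, identified with (⊕_{i=1}^n E_i*)_∞. Then for all ε > 0, all ordinals α and each 1 ≤ j ≤ n: K_1 × … × K_{j−1} × s_ε^α(K_j) × K_{j+1} × … × K_n ⊆ s_ε^α(∏_{i=1}^n K_i); consequently ∏_{i=1}^n s_ε^α(K_i) ⊆ s_ε^{α·n}(∏_{i=1}^n K_i). -/

import Mathlib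

open NormedSpace Metric
open scoped Ordinal Pointwise
open Bornology
open scoped ENNReal

noncomputable section

/-- A subset of the norm dual is weak-* open if it is open when transported to the weak-* dual. -/
def IsWeakStarOpen {E : Type*} [NormedAddCommGroup E] [NormedSpace ℝ E]
    (V : Set (StrongDual ℝ E)) : Prop :=
  IsOpen (StrongDual.toWeakDual '' V : Set (WeakDual ℝ E))

/-- A subset of the norm dual is weak-* compact if it is compact when transported to the
weak-* dual. -/
def IsWeakStarCompact {E : Type*} [NormedAddCommGroup E] [NormedSpace ℝ E]
    (K : Set (StrongDual ℝ E)) : Prop :=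
  IsCompact (StrongDual.toWeakDual '' K : Set (WeakDual ℝ E))

/-- The Szlenk derivation `s_ε(K)`. -/
def szlenkDeriv {E : Type*} [NormedAddCommGroup E] [NormedSpace ℝ E]
    (ε : ℝ) (K : Set (StrongDual ℝ E)) : Set (StrongDual ℝ E) :=
  {x | x ∈ K ∧ ∀ V : Set (StrongDual ℝ E), IsWeakStarOpen V → x ∈ V → ε < Metric.diam (K ∩ V)}

/-- The transfinite iterates `s_ε^α(K)` of the Szlenk derivation. -/
noncomputable def szlenkIter {E : Type*} [NormedAddCommGroup E] [NormedSpace ℝ E]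
    (ε : ℝ) (K : Set (StrongDual ℝ E)) (α : Ordinal) : Set (StrongDual ℝ E) :=
  Ordinal.limitRecOn α K (fun _ S => szlenkDeriv ε S)
    (fun o _ ih => ⋂ (β : Ordinal) (h : β < o), ih β h)

/-- `Sz(K) ≤ γ` : the `γ`-th Szlenk derivative of `K` is empty for every `ε > 0`. -/
def SzLE {E : Type*} [NormedAddCommGroup E] [NormedSpace ℝ E]
    (K : Set (StrongDual ℝ E)) (γ : Ordinal) : Prop :=
  ∀ ε : ℝ, 0 < ε → szlenkIter ε K γ = ∅

/-- The image of a set under the adjoint of an operator. -/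
def adjImage {E F : Type*} [NormedAddCommGroup E] [NormedSpace ℝ E]
    [NormedAddCommGroup F] [NormedSpace ℝ F] (T : E →L[ℝ] F) (K : Set (StrongDual ℝ F)) :
    Set (StrongDual ℝ E) :=
  (fun g : StrongDual ℝ F => g.comp T) '' K

/-- `Sz(T) ≤ γ` for an operator `T`. -/
def SzOpLE {E F : Type*} [NormedAddCommGroup E] [NormedSpace ℝ E]
    [NormedAddCommGroup F] [NormedSpace ℝ F] (T : E →L[ℝ] F) (γ : Ordinal) : Prop :=
  SzLE (adjImage T (closedBall (0 : StrongDual ℝ F) 1)) γ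

/-- `Sz(E) ≤ γ` for a Banach space `E`. -/
def SzSpaceLE (E : Type*) [NormedAddCommGroup E] [NormedSpace ℝ E] (γ : Ordinal) : Prop :=
  SzLE (closedBall (0 : StrongDual ℝ E) 1) γ



/-- The product `∏ K_i` of weak-*-compact sets `K_i ⊆ E_i*`, viewed inside the dual of the
`ℓ1`-direct sum `(⊕ E_i)_1` (identified with `(⊕ E_i*)_∞`): it consists of the functionals
`x ↦ ∑ i, g i (x i)` with `g i ∈ K i` for all `i`. -/
def prodDualSet {n : ℕ} (E : Fin n → Type*) [∀ i, NormedAddCommGroup (E i)]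
    [∀ i, NormedSpace ℝ (E i)] (K : ∀ i, Set (StrongDual ℝ (E i))) :
    Set (StrongDual ℝ (PiLp 1 E)) :=
  {f | ∃ g : ∀ i, StrongDual ℝ (E i), (∀ i, g i ∈ K i) ∧ ∀ x : PiLp 1 E, f x = ∑ i, g i (x i)}

section OrdAux
variable {E : Type*} [NormedAddCommGroup E] [NormedSpace ℝ E] {ε : ℝ} {K A B : Set (StrongDual ℝ E)}

theorem szlenkDeriv_subset : szlenkDeriv ε K ⊆ K := fun _ hx => hx.1

@[simp] theorem szlenkIter_zero : szlenkIter ε K 0 = K := Ordinal.limitRecOn_zero ..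

theorem szlenkIter_succ (α : Ordinal) :
    szlenkIter ε K (α + 1) = szlenkDeriv ε (szlenkIter ε K α) :=
  Ordinal.limitRecOn_add_one ..

theorem szlenkIter_limit {α : Ordinal} (h : Order.IsSuccLimit α) :
    szlenkIter ε K α = ⋂ (β : Ordinal) (_ : β < α), szlenkIter ε K β :=
  Ordinal.limitRecOn_limit _ _ _ _ h

theorem szlenkIter_subset (α : Ordinal) : szlenkIter ε K α ⊆ K := by
  induction α using Ordinal.limitRecOn with
  | zero => simp
  | add_one o ih => rw [szlenkIter_succ]; exact szlenkDeriv_subset.trans ih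
  | limit o ho ih =>
    rw [szlenkIter_limit ho]
    intro x hx
    simpa using Set.mem_iInter₂.mp hx 0 ho.pos

theorem szlenkIter_antitone {β γ : Ordinal} (h : β ≤ γ) :
    szlenkIter ε K γ ⊆ szlenkIter ε K β := by
  induction γ using Ordinal.limitRecOn with
  | zero => rw [nonpos_iff_eq_zero.mp h]
  | add_one o ih =>
    rcases Order.le_succ_iff_eq_or_le.mp h with rfl | h'
    · exact subset_rfl
    · rw [szlenkIter_succ]; exact szlenkDeriv_subset.trans (ih h')
  | limit o ho ih =>
    rcases h.lt_or_eq with h' | rfl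
    · rw [szlenkIter_limit ho]; intro x hx; exact Set.mem_iInter₂.mp hx β h'
    · exact subset_rfl

theorem szlenkDeriv_mono (hAB : A ⊆ B) (hB : IsBounded B) :
    szlenkDeriv ε A ⊆ szlenkDeriv ε B := by
  rintro x ⟨hxA, hx⟩
  refine ⟨hAB hxA, fun V hV hxV => (hx V hV hxV).trans_le ?_⟩
  exact Metric.diam_mono (Set.inter_subset_inter_left _ hAB) (hB.subset Set.inter_subset_left)

theorem szlenkIter_mono (hAB : A ⊆ B) (hB : IsBounded B) (α : Ordinal) :
    szlenkIter ε A α ⊆ szlenkIter ε B α := by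
  induction α using Ordinal.limitRecOn with
  | zero => simpa
  | add_one o ih =>
    rw [szlenkIter_succ, szlenkIter_succ]
    exact szlenkDeriv_mono ih (hB.subset (szlenkIter_subset o))
  | limit o ho ih =>
    rw [szlenkIter_limit ho, szlenkIter_limit ho]
    exact Set.iInter₂_mono fun β hβ => ih β hβ

theorem szlenkIter_add (β α : Ordinal) :
    szlenkIter ε K (β + α) = szlenkIter ε (szlenkIter ε K β) α := by
  induction α using Ordinal.limitRecOn with
  | zero => simp
  | add_one o ih => rw [← add_assoc, szlenkIter_succ, szlenkIter_succ, ih]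
  | limit o ho ih =>
    rw [szlenkIter_limit ho, szlenkIter_limit (Ordinal.isSuccLimit_add β ho)]
    apply Set.Subset.antisymm
    · refine Set.subset_iInter₂ fun δ hδ => ?_
      rw [← ih δ hδ]
      intro x hx
      exact Set.mem_iInter₂.mp hx (β + δ) ((add_lt_add_iff_left β).mpr hδ)
    · refine Set.subset_iInter₂ fun γ hγ => fun x hx => ?_
      rcases le_or_gt γ β with h' | h'
      · have h0 := Set.mem_iInter₂.mp hx 0 ho.pos
        rw [← ih 0 ho.pos, add_zero] at h0
        exact szlenkIter_antitone h' h0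
      · have hδ : γ - β < o := by
          rw [← add_lt_add_iff_left (a := β), Ordinal.add_sub_cancel_of_le h'.le]
          exact hγ
        have h0 := Set.mem_iInter₂.mp hx (γ - β) hδ
        rw [← ih _ hδ, Ordinal.add_sub_cancel_of_le h'.le] at h0
        exact h0

end OrdAux

section Bounded
variable {E : Type*} [NormedAddCommGroup E] [NormedSpace ℝ E] [CompleteSpace E]

theorem IsWeakStarCompact.isBounded {K : Set (StrongDual ℝ E)} (hK : IsWeakStarCompact K) :
    IsBounded K := by
  rcases K.eq_empty_or_nonempty with rfl | ⟨f₀, hf₀⟩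
  · simp
  have h : ∀ x : E, ∃ C, ∀ i : K, ‖(i : StrongDual ℝ E) x‖ ≤ C := by
    intro x
    have hc : IsCompact ((fun φ : WeakDual ℝ E => φ x) '' (StrongDual.toWeakDual '' K)) :=
      hK.image (WeakDual.eval_continuous x)
    obtain ⟨C, hC⟩ := isBounded_iff_forall_norm_le.mp hc.isBounded
    exact ⟨C, fun i => hC _ ⟨StrongDual.toWeakDual i, ⟨i, i.2, rfl⟩, rfl⟩⟩
  obtain ⟨C, hC⟩ := banach_steinhaus (g := fun i : K => (i : StrongDual ℝ E)) h
  exact isBounded_iff_forall_norm_le.mpr ⟨C, fun f hf => hC ⟨f, hf⟩⟩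

end Bounded

section Prod
variable {n : ℕ} {E : Fin n → Type*} [∀ i, NormedAddCommGroup (E i)] [∀ i, NormedSpace ℝ (E i)]

/-- The canonical functional `x ↦ ∑ i, g i (x i)` on the `ℓ¹`-sum. -/
def PhiFun (g : ∀ i, StrongDual ℝ (E i)) : StrongDual ℝ (PiLp 1 E) :=
  ∑ i, (g i).comp (PiLp.proj 1 E i)

theorem PhiFun_apply (g : ∀ i, StrongDual ℝ (E i)) (x : PiLp 1 E) :
    PhiFun g x = ∑ i, g i (x i) := by
  simp [PhiFun]

theorem mem_prodDualSet {K : ∀ i, Set (StrongDual ℝ (E i))} {f : StrongDual ℝ (PiLp 1 E)} :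
    f ∈ prodDualSet E K ↔ ∃ g : ∀ i, StrongDual ℝ (E i), (∀ i, g i ∈ K i) ∧ f = PhiFun g := by
  constructor
  · rintro ⟨g, hg, hfg⟩
    exact ⟨g, hg, ContinuousLinearMap.ext fun x => by rw [hfg, PhiFun_apply]⟩
  · rintro ⟨g, hg, rfl⟩
    exact ⟨g, hg, fun x => PhiFun_apply g x⟩

theorem prodDualSet_mono {K K' : ∀ i, Set (StrongDual ℝ (E i))} (h : ∀ i, K i ⊆ K' i) :
    prodDualSet E K ⊆ prodDualSet E K' :=
  fun _ ⟨g, hg, hfg⟩ => ⟨g, fun i => h i (hg i), hfg⟩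

theorem norm_le_norm_PhiFun_sub (g g' : ∀ i, StrongDual ℝ (E i)) (j : Fin n)
    (h : ∀ i, i ≠ j → g i = g' i) : ‖g j - g' j‖ ≤ ‖PhiFun g - PhiFun g'‖ := by
  refine ContinuousLinearMap.opNorm_le_bound _ (norm_nonneg _) fun v => ?_
  set x : PiLp 1 E := (WithLp.equiv 1 (∀ i, E i)).symm (Pi.single j v) with hx
  have hxv : ∀ i, x i = Pi.single j v i := fun i => rfl
  have h1 : (PhiFun g - PhiFun g') x = (g j - g' j) v := by
    rw [ContinuousLinearMap.sub_apply, PhiFun_apply, PhiFun_apply, ← Finset.sum_sub_distrib]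
    rw [Finset.sum_eq_single j]
    · simp [hxv]
    · intro i _ hij
      rw [h i hij, sub_self]
    · simp
  calc ‖(g j - g' j) v‖ = ‖(PhiFun g - PhiFun g') x‖ := by rw [h1]
    _ ≤ ‖PhiFun g - PhiFun g'‖ * ‖x‖ := ContinuousLinearMap.le_opNorm _ _
    _ = ‖PhiFun g - PhiFun g'‖ * ‖v‖ := by rw [hx, WithLp.equiv_symm_apply, PiLp.norm_toLp_single]

theorem norm_PhiFun_le (g : ∀ i, StrongDual ℝ (E i)) (C : Fin n → ℝ) (h : ∀ i, ‖g i‖ ≤ C i) :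
    ‖PhiFun g‖ ≤ ∑ i, C i := by
  refine (norm_sum_le _ _).trans (Finset.sum_le_sum fun i _ => ?_)
  refine ContinuousLinearMap.opNorm_le_bound _ ((norm_nonneg (g i)).trans (h i)) fun x => ?_
  have hxi : ‖x i‖ ≤ ‖x‖ := by
    rw [PiLp.norm_eq_sum (by norm_num)]
    simpa using Finset.single_le_sum (f := fun i => ‖x i‖ ^ (1 : ℝ≥0∞).toReal)
      (fun i _ => by positivity) (Finset.mem_univ i)
  calc ‖((g i).comp (PiLp.proj 1 E i)) x‖ = ‖g i (x i)‖ := by simp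
    _ ≤ ‖g i‖ * ‖x i‖ := ContinuousLinearMap.le_opNorm _ _
    _ ≤ C i * ‖x‖ := mul_le_mul (h i) hxi (norm_nonneg _) ((norm_nonneg _).trans (h i))

theorem isBounded_prodDualSet {K : ∀ i, Set (StrongDual ℝ (E i))} (hK : ∀ i, IsBounded (K i)) :
    IsBounded (prodDualSet E K) := by
  have h : ∀ i, ∃ C, ∀ f ∈ K i, ‖f‖ ≤ C := fun i => isBounded_iff_forall_norm_le.mp (hK i)
  choose C hC using h
  refine isBounded_iff_forall_norm_le.mpr ⟨∑ i, C i, ?_⟩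
  rintro f hf
  rcases mem_prodDualSet.mp hf with ⟨g, hg, rfl⟩
  exact norm_PhiFun_le g C fun i => hC i _ (hg i)

/-- Weak-* openness of the slice of a weak-* open set along coordinate `j`. -/
theorem isWeakStarOpen_slice (g : ∀ i, StrongDual ℝ (E i)) (j : Fin n)
    {V : Set (StrongDual ℝ (PiLp 1 E))} (hV : IsWeakStarOpen V) :
    IsWeakStarOpen {h : StrongDual ℝ (E j) | PhiFun (Function.update g j h) ∈ V} := by
  set φ : StrongDual ℝ (E j) → StrongDual ℝ (PiLp 1 E) := fun h => PhiFun (Function.update g j h) with hφ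
  set ψ : WeakDual ℝ (E j) → WeakDual ℝ (PiLp 1 E) :=
    fun h => StrongDual.toWeakDual (φ (WeakDual.toStrongDual h)) with hψ
  have hcont : Continuous ψ := by
    refine WeakDual.continuous_of_continuous_eval fun x => ?_
    have : ∀ h : WeakDual ℝ (E j), ψ h x =
        h (x j) + ∑ i ∈ Finset.univ.erase j, g i (x i) := by
      intro h
      show φ (WeakDual.toStrongDual h) x = _
      rw [hφ]
      simp only [PhiFun_apply]
      have hsum : ∑ i ∈ Finset.univ.erase j,
          (Function.update g j (WeakDual.toStrongDual h) i) (x i) =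
          ∑ i ∈ Finset.univ.erase j, g i (x i) :=
        Finset.sum_congr rfl fun i hi => by
          rw [Function.update_of_ne (Finset.ne_of_mem_erase hi)]
      rw [← Finset.add_sum_erase _ _ (Finset.mem_univ j), Function.update_self, hsum]
      rfl
    simp only [this]
    exact (WeakDual.eval_continuous (x j)).add continuous_const
  have himg : StrongDual.toWeakDual '' {h : StrongDual ℝ (E j) | φ h ∈ V} =
      ψ ⁻¹' (StrongDual.toWeakDual '' V) := by
    ext z
    constructor
    · rintro ⟨h, hh, rfl⟩
      exact ⟨φ h, hh, rfl⟩
    · rintro ⟨v, hv, hvz⟩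
      refine ⟨WeakDual.toStrongDual z, ?_, rfl⟩
      have hv' : v = φ (WeakDual.toStrongDual z) :=
        StrongDual.toWeakDual.injective
          (show StrongDual.toWeakDual v = StrongDual.toWeakDual (φ (WeakDual.toStrongDual z)) from hvz)
      show φ (WeakDual.toStrongDual z) ∈ V
      exact hv' ▸ hv
  show IsOpen (StrongDual.toWeakDual '' _)
  rw [himg]
  exact hV.preimage hcont

end Prod


section Main
variable {n : ℕ} {E : Fin n → Type*} [∀ i, NormedAddCommGroup (E i)] [∀ i, NormedSpace ℝ (E i)]

theorem prod_update_szlenkIter_subset {K : ∀ i, Set (StrongDual ℝ (E i))}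
    (hK : ∀ i, IsBounded (K i)) {ε : ℝ} (hε : 0 < ε) (α : Ordinal) (j : Fin n) :
    prodDualSet E (Function.update K j (szlenkIter ε (K j) α)) ⊆
      szlenkIter ε (prodDualSet E K) α := by
  induction α using Ordinal.limitRecOn with
  | zero => rw [szlenkIter_zero, szlenkIter_zero, Function.update_eq_self]
  | add_one o ih =>
    intro f hf
    rcases mem_prodDualSet.mp hf with ⟨g, hg, rfl⟩
    have hgj : g j ∈ szlenkDeriv ε (szlenkIter ε (K j) o) := by
      have := hg j; rwa [Function.update_self, szlenkIter_succ] at this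
    have hgi : ∀ i, i ≠ j → g i ∈ K i := fun i hij => by
      have := hg i; rwa [Function.update_of_ne hij] at this
    have hmem : ∀ h ∈ szlenkIter ε (K j) o,
        PhiFun (Function.update g j h) ∈ szlenkIter ε (prodDualSet E K) o := by
      intro h hh
      refine ih (mem_prodDualSet.mpr ⟨Function.update g j h, fun i => ?_, rfl⟩)
      by_cases hij : i = j
      · subst hij; rw [Function.update_self, Function.update_self]; exact hh
      · rw [Function.update_of_ne hij, Function.update_of_ne hij]; exact hgi i hij
    rw [szlenkIter_succ]
    refine ⟨?_, ?_⟩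
    · have := hmem (g j) (szlenkDeriv_subset hgj)
      rwa [Function.update_eq_self] at this
    · intro V hV hfV
      set W := {h : StrongDual ℝ (E j) | PhiFun (Function.update g j h) ∈ V} with hW
      have hWopen : IsWeakStarOpen W := isWeakStarOpen_slice g j hV
      have hgjW : g j ∈ W := by
        show PhiFun (Function.update g j (g j)) ∈ V
        rw [Function.update_eq_self]; exact hfV
      have hdiam := hgj.2 W hWopen hgjW
      have hex : ¬ ∀ a ∈ szlenkIter ε (K j) o ∩ W, ∀ b ∈ szlenkIter ε (K j) o ∩ W,
          dist a b ≤ ε := fun hco =>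
        absurd (Metric.diam_le_of_forall_dist_le hε.le hco) (not_le.mpr hdiam)
      push_neg at hex
      obtain ⟨a, ha, b, hb, hab⟩ := hex
      have hBnd : IsBounded (szlenkIter ε (prodDualSet E K) o ∩ V) :=
        (isBounded_prodDualSet hK).subset
          (Set.inter_subset_left.trans (szlenkIter_subset o))
      refine hab.trans_le ?_
      calc dist a b ≤ dist (PhiFun (Function.update g j a)) (PhiFun (Function.update g j b)) := by
            rw [dist_eq_norm, dist_eq_norm]
            have := norm_le_norm_PhiFun_sub (Function.update g j a) (Function.update g j b) j
              (fun i hij => by rw [Function.update_of_ne hij, Function.update_of_ne hij])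
            rwa [Function.update_self, Function.update_self] at this
        _ ≤ _ := Metric.dist_le_diam_of_mem hBnd ⟨hmem a ha.1, ha.2⟩ ⟨hmem b hb.1, hb.2⟩
  | limit o ho ih =>
    intro f hf
    rw [szlenkIter_limit ho]
    refine Set.mem_iInter₂.mpr fun β hβ => ?_
    refine ih β hβ (prodDualSet_mono (fun i => ?_) hf)
    by_cases hij : i = j
    · subst hij
      rw [Function.update_self, Function.update_self]
      exact szlenkIter_antitone hβ.le
    · rw [Function.update_of_ne hij, Function.update_of_ne hij]

end Main

/-- For weak-*-compact sets `K_i ⊆ E_i*` and `∏ K_i ⊆ ((⊕ E_i)_1)*`: for all `ε > 0`,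
ordinals `α` and `1 ≤ j ≤ n`,
`K_1 × … × s_ε^α(K_j) × … × K_n ⊆ s_ε^α(∏ K_i)`, and consequently
`∏ s_ε^α(K_i) ⊆ s_ε^{α·n}(∏ K_i)`. -/
theorem prodDualSet_szlenkIter_subset
    {n : ℕ} (E : Fin n → Type*) [∀ i, NormedAddCommGroup (E i)]
    [∀ i, NormedSpace ℝ (E i)] [∀ i, CompleteSpace (E i)]
    (K : ∀ i, Set (StrongDual ℝ (E i))) (hK : ∀ i, IsWeakStarCompact (K i))
    (ε : ℝ) (hε : 0 < ε) (α : Ordinal) :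
    (∀ j : Fin n,
      prodDualSet E (Function.update K j (szlenkIter ε (K j) α)) ⊆
        szlenkIter ε (prodDualSet E K) α) ∧
    prodDualSet E (fun i => szlenkIter ε (K i) α) ⊆
      szlenkIter ε (prodDualSet E K) (α * (n : Ordinal)) := by
  have hKb : ∀ i, Bornology.IsBounded (K i) := fun i => (hK i).isBounded
  have part1 : ∀ j : Fin n,
      prodDualSet E (Function.update K j (szlenkIter ε (K j) α)) ⊆
        szlenkIter ε (prodDualSet E K) α :=
    fun j => prod_update_szlenkIter_subset hKb hε α j
  refine ⟨part1, ?_⟩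
  have main : ∀ m : ℕ, m ≤ n →
      prodDualSet E (fun i => if (i : ℕ) < m then szlenkIter ε (K i) α else K i) ⊆
        szlenkIter ε (prodDualSet E K) (α * (m : Ordinal)) := by
    intro m
    induction m with
    | zero =>
      intro _
      rw [show (fun i : Fin n => if (i : ℕ) < 0 then szlenkIter ε (K i) α else K i) = K from
        funext fun i => if_neg (Nat.not_lt_zero _), Nat.cast_zero, mul_zero, szlenkIter_zero]
    | succ m ihm =>
      intro hm1
      have hmn : m < n := Nat.lt_of_succ_le hm1
      set L : ∀ i, Set (StrongDual ℝ (E i)) :=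
        fun i => if (i : ℕ) < m then szlenkIter ε (K i) α else K i with hLdef
      set j : Fin n := ⟨m, hmn⟩ with hj
      have hLsub : ∀ i, L i ⊆ K i := by
        intro i
        by_cases h' : (i : ℕ) < m
        · rw [hLdef]; simp only [if_pos h']; exact szlenkIter_subset α
        · rw [hLdef]; simp only [if_neg h']; exact subset_rfl
      have hLb : ∀ i, Bornology.IsBounded (L i) := fun i => (hKb i).subset (hLsub i)
      have hL : (fun i : Fin n => if (i : ℕ) < m + 1 then szlenkIter ε (K i) α else K i) =
          Function.update L j (szlenkIter ε (L j) α) := by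
        funext i
        by_cases hij : i = j
        · subst hij
          rw [Function.update_self]
          have hjm : (j : ℕ) = m := rfl
          rw [hLdef]
          simp only [hjm, if_pos (Nat.lt_succ_self m), if_neg (lt_irrefl m)]
        · rw [Function.update_of_ne hij, hLdef]
          have him : (i : ℕ) ≠ m := fun hh => hij (Fin.ext hh)
          by_cases h' : (i : ℕ) < m
          · simp only [if_pos h', if_pos (h'.trans (Nat.lt_succ_self m))]
          · simp only [if_neg h', if_neg (show ¬ (i : ℕ) < m + 1 by omega)]
      rw [hL]
      refine (prod_update_szlenkIter_subset hLb hε α j).trans ?_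
      have h1 : prodDualSet E L ⊆ szlenkIter ε (prodDualSet E K) (α * (m : Ordinal)) := ihm hmn.le
      have h2 := szlenkIter_mono (ε := ε) h1
        ((isBounded_prodDualSet hKb).subset (szlenkIter_subset _)) α
      rw [← szlenkIter_add] at h2
      rwa [Nat.cast_succ, mul_add, mul_one]
  have hfinal : (fun i : Fin n => szlenkIter ε (K i) α) =
      fun i : Fin n => if (i : ℕ) < n then szlenkIter ε (K i) α else K i :=
    funext fun i => (if_pos i.isLt).symm
  rw [hfinal]
  exact main n le_rfl
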